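/- arXiv:1107.1200 — 5 statements merged into one kernel-verified Lean document; each statement's English description precedes it below -/
import Mathlib

section
/- For every timed membrane system Π with execution-time function e, there exists an untimed membrane system Π′ over the extended alphabet V′ = V ∪ {a_j | a ∈ V, 0 ≤ j ≤ m−1} (where m is the maximal execution time of rules in Π) such that for every object a ∈ V, every membrane i, and every time step k, the multiplicity of a in membrane i of Π at step k equals its multiplicity in membrane i of Π′ at step k. -/
/-- A (timed) membrane system: `n` membranes, objects `V`, rule names `ρ`.
`lhs r i a` is the multiplicity of object `a` consumed by rule `r` in membrane `i`;
`rhs r i a` is the multiplicity of `a` produced by `r` into membrane `i`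
(targets `here`/`out`/`in_j` already resolved via the membrane structure);
`mem r` is the membrane of rule `r`; `e r` is its execution time; `w0` the initial contents. -/
structure MS (V : Type) (n : ℕ) (ρ : Type) where
  mem : ρ → Fin n
  lhs : ρ → Fin n → V → ℕ
  rhs : ρ → Fin n → V → ℕ
  e : ρ → ℕ
  w0 : Fin n → V → ℕ

/-- A configuration of a timed membrane system: current contents `w` together with
`pending j i a`, the number of copies of `a` produced into membrane `i` that still
need `j` further ticks before becoming available. -/
structure Conf (V : Type) (n : ℕ) where
  w : Fin n → V → ℕ
  pending : ℕ → Fin n → V → ℕ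

/-- `lhs_i(a) = Σ_r R(r)·lhs^r_i(a)`. -/
def lhsSum {V : Type} {n : ℕ} {ρ : Type} [Fintype ρ] (S : MS V n ρ)
    (R : ρ → ℕ) (i : Fin n) (a : V) : ℕ :=
  ∑ r, R r * S.lhs r i a

/-- `rhs_i(a) = Σ_r R(r)·rhs^r_i(a)`, the total output of `R`. -/
def rhsSum {V : Type} {n : ℕ} {ρ : Type} [Fintype ρ] (S : MS V n ρ)
    (R : ρ → ℕ) (i : Fin n) (a : V) : ℕ :=
  ∑ r, R r * S.rhs r i a

/-- Output of the multiset `R` of rules with delay exactly `j`. -/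
def outAt {V : Type} {n : ℕ} {ρ : Type} [Fintype ρ] (S : MS V n ρ)
    (R : ρ → ℕ) (j : ℕ) (i : Fin n) (a : V) : ℕ :=
  ∑ r, if S.e r = j then R r * S.rhs r i a else 0

/-- Condition (i): enough objects in every membrane. -/
def MSEnabled {V : Type} {n : ℕ} {ρ : Type} [Fintype ρ] (S : MS V n ρ)
    (R : ρ → ℕ) (w : Fin n → V → ℕ) : Prop :=
  ∀ i a, lhsSum S R i a ≤ w i a

/-- Conditions (i)+(ii): `R` is enabled and no further rule can be added (maximal parallelism). -/
def MSMaximal {V : Type} {n : ℕ} {ρ : Type} [Fintype ρ] (S : MS V n ρ)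
    (R : ρ → ℕ) (w : Fin n → V → ℕ) : Prop :=
  MSEnabled S R w ∧ ¬ ∃ r, ∀ i a, S.lhs r i a + lhsSum S R i a ≤ w i a

/-- The maximally parallel timed step `C ⟹_R C'`: subtract left hand sides, add
all pending outputs whose delay has elapsed, and record freshly produced delayed outputs. -/
def MSStep {V : Type} {n : ℕ} {ρ : Type} [Fintype ρ] (S : MS V n ρ)
    (R : ρ → ℕ) (C C' : Conf V n) : Prop :=
  MSMaximal S R C.w ∧
  (∀ i a, C'.w i a = C.w i a - lhsSum S R i a + C.pending 0 i a + outAt S R 0 i a) ∧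
  (∀ j i a, C'.pending j i a = C.pending (j+1) i a + outAt S R (j+1) i a)

/-- The initial configuration: initial multisets, no pending outputs. -/
def msInit {V : Type} {n : ℕ} {ρ : Type} (S : MS V n ρ) : Conf V n :=
  ⟨S.w0, fun _ _ _ => 0⟩

/-- A run of the timed membrane system: at the `k`-th tick of the global clock the
rule multiset `Rs k` is applied, leading from configuration `Cs k` to `Cs (k+1)`. -/
def MSRun {V : Type} {n : ℕ} {ρ : Type} [Fintype ρ] (S : MS V n ρ)
    (Rs : ℕ → ρ → ℕ) (Cs : ℕ → Conf V n) : Prop :=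
  Cs 0 = msInit S ∧ ∀ k, MSStep S (Rs k) (Cs k) (Cs (k+1))

/-- An untimed membrane system (no execution-time function). -/
structure UMS (V : Type) (n : ℕ) (ρ : Type) where
  mem : ρ → Fin n
  lhs : ρ → Fin n → V → ℕ
  rhs : ρ → Fin n → V → ℕ
  w0 : Fin n → V → ℕ

def ulhsSum {V : Type} {n : ℕ} {ρ : Type} [Fintype ρ] (S : UMS V n ρ)
    (R : ρ → ℕ) (i : Fin n) (a : V) : ℕ :=
  ∑ r, R r * S.lhs r i a

def urhsSum {V : Type} {n : ℕ} {ρ : Type} [Fintype ρ] (S : UMS V n ρ)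
    (R : ρ → ℕ) (i : Fin n) (a : V) : ℕ :=
  ∑ r, R r * S.rhs r i a

def UMSMaximal {V : Type} {n : ℕ} {ρ : Type} [Fintype ρ] (S : UMS V n ρ)
    (R : ρ → ℕ) (w : Fin n → V → ℕ) : Prop :=
  (∀ i a, ulhsSum S R i a ≤ w i a) ∧
  ¬ ∃ r, ∀ i a, S.lhs r i a + ulhsSum S R i a ≤ w i a

/-- Maximally parallel untimed step: all products are available at the next step. -/
def UMSStep {V : Type} {n : ℕ} {ρ : Type} [Fintype ρ] (S : UMS V n ρ)
    (R : ρ → ℕ) (w w' : Fin n → V → ℕ) : Prop :=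
  UMSMaximal S R w ∧ ∀ i a, w' i a = w i a - ulhsSum S R i a + urhsSum S R i a

def UMSRun {V : Type} {n : ℕ} {ρ : Type} [Fintype ρ] (S : UMS V n ρ)
    (Rs : ℕ → ρ → ℕ) (Ws : ℕ → Fin n → V → ℕ) : Prop :=
  Ws 0 = S.w0 ∧ ∀ k, UMSStep S (Rs k) (Ws k) (Ws (k+1))

/-! ### Auxiliary constructions for the simulation -/

open scoped Classical

section TimedToUntimedAux

variable {V : Type} [DecidableEq V] {n : ℕ} {ρ : Type} [Fintype ρ]

/-- Maximal execution time of the rules. -/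
abbrev mEx (S : MS V n ρ) : ℕ := Finset.univ.sup S.e

/-- `Zr S r` says rule `r` has an empty right-hand side. -/
def Zr (S : MS V n ρ) (r : ρ) : Prop := ∀ i a, S.rhs r i a = 0

/-- Left-hand sides of the simulating untimed system: original rules (on plain objects),
countdown rules `(r, d)` consuming the stage-`d` delayed batch of rule `r`
(replaced by a dummy self-loop on `a0` at membrane `i0` when `r` has empty rhs),
and a dummy self-loop rule. -/
noncomputable def simLhs (S : MS V n ρ) (a0 : V) (i0 : Fin n) :
    (ρ ⊕ ρ × Fin (mEx S) ⊕ Unit) → Fin n → (V ⊕ V × Fin (mEx S)) → ℕ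
  | .inl r, i, .inl a => S.lhs r i a
  | .inl _, _, .inr _ => 0
  | .inr (.inl (r, _)), i, .inl a =>
      if Zr S r then (if i = i0 ∧ a = a0 then 1 else 0) else 0
  | .inr (.inl (r, d)), i, .inr (a, j) =>
      if Zr S r then 0 else if j = d then S.rhs r i a else 0
  | .inr (.inr _), i, .inl a => if i = i0 ∧ a = a0 then 1 else 0
  | .inr (.inr _), _, .inr _ => 0

/-- Right-hand sides of the simulating untimed system. -/
noncomputable def simRhs (S : MS V n ρ) (a0 : V) (i0 : Fin n) :
    (ρ ⊕ ρ × Fin (mEx S) ⊕ Unit) → Fin n → (V ⊕ V × Fin (mEx S)) → ℕ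
  | .inl r, i, .inl a => if S.e r = 0 then S.rhs r i a else 0
  | .inl r, i, .inr (a, j) => if S.e r = j.val + 1 then S.rhs r i a else 0
  | .inr (.inl (r, d)), i, .inl a =>
      if Zr S r then (if i = i0 ∧ a = a0 then 1 else 0)
      else if d.val = 0 then S.rhs r i a else 0
  | .inr (.inl (r, d)), i, .inr (a, j) =>
      if Zr S r then 0 else if d.val = j.val + 1 then S.rhs r i a else 0
  | .inr (.inr _), i, .inl a => if i = i0 ∧ a = a0 then 1 else 0
  | .inr (.inr _), _, .inr _ => 0

/-- The simulating untimed membrane system. -/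
noncomputable def simUMS (S : MS V n ρ) (a0 : V) (i0 : Fin n) :
    UMS (V ⊕ V × Fin (mEx S)) n (ρ ⊕ ρ × Fin (mEx S) ⊕ Unit) where
  mem := Sum.elim S.mem (Sum.elim (fun p => S.mem p.1) (fun _ => i0))
  lhs := simLhs S a0 i0
  rhs := simRhs S a0 i0
  w0 := fun i => Sum.elim (fun a => S.w0 i a) (fun _ => 0)

/-- `yc S Rs k r d` = number of pending applications of rule `r` with `d+1` remaining ticks
after `k` steps of the run with rule multisets `Rs`. -/
def yc (S : MS V n ρ) (Rs : ℕ → ρ → ℕ) : ℕ → ρ → ℕ → ℕ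
  | 0, _, _ => 0
  | k+1, r, d => yc S Rs k r (d+1) + (if S.e r = d+1 then Rs k r else 0)

/-- Rule multisets of the simulating run. -/
noncomputable def simRs (S : MS V n ρ) (Rs : ℕ → ρ → ℕ) (Cs : ℕ → Conf V n)
    (a0 : V) (i0 : Fin n) (k : ℕ) : (ρ ⊕ ρ × Fin (mEx S) ⊕ Unit) → ℕ :=
  Sum.elim (Rs k) (Sum.elim (fun p => if Zr S p.1 then 0 else yc S Rs k p.1 p.2.val)
    (fun _ => (Cs k).w i0 a0 - lhsSum S (Rs k) i0 a0))

/-- Configurations of the simulating run. -/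
def simWs {V : Type} {n : ℕ} (Cs : ℕ → Conf V n) (m : ℕ) (k : ℕ) (i : Fin n) :
    (V ⊕ V × Fin m) → ℕ :=
  Sum.elim (fun a => (Cs k).w i a) (fun p => (Cs k).pending p.2.val i p.1)

lemma sum_fin_ite {m : ℕ} (c : ℕ) (g : ℕ → ℕ) :
    (∑ d : Fin m, if d.val = c then g d.val else 0) = if c < m then g c else 0 := by
  rcases Nat.lt_or_ge c m with h | h
  · rw [if_pos h, Finset.sum_eq_single (⟨c, h⟩ : Fin m)]
    · simp
    · intro d _ hd
      rw [if_neg]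
      intro hdc; exact hd (Fin.ext hdc)
    · simp
  · rw [if_neg (Nat.not_lt.2 h)]
    apply Finset.sum_eq_zero
    intro d _
    rw [if_neg]
    exact Nat.ne_of_lt (lt_of_lt_of_le d.isLt h)

end TimedToUntimedAux

/-- **Proposition (timed → untimed membrane systems).** For every timed membrane system
`S` over alphabet `V` there exists an untimed membrane system `S'` over the extended
alphabet `V' = V ⊕ {a_j | a ∈ V, 0 ≤ j ≤ m−1}` (where `m` is the maximal execution time
of the rules of `S`) simulating the evolution of `S`: for every run of `S` there is a
run of `S'` such that at every step `k`, every membrane `i` and every object `a ∈ V`,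
the multiplicity of `a` in membrane `i` is the same in both systems. -/
theorem timed_to_untimed_membrane (V : Type) [DecidableEq V] (n : ℕ)
    (ρ : Type) [Fintype ρ] (S : MS V n ρ) :
    ∃ (ρ' : Type) (_ : Fintype ρ')
      (S' : UMS (V ⊕ V × Fin (Finset.univ.sup S.e)) n ρ'),
      ∀ (Rs : ℕ → ρ → ℕ) (Cs : ℕ → Conf V n), MSRun S Rs Cs →
        ∃ (Rs' : ℕ → ρ' → ℕ) (Ws : ℕ → Fin n → (V ⊕ V × Fin (Finset.univ.sup S.e)) → ℕ),
          UMSRun S' Rs' Ws ∧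
          ∀ (k : ℕ) (i : Fin n) (a : V), (Cs k).w i a = Ws k i (Sum.inl a) := by
  classical
  by_cases hne : Nonempty V ∧ 0 < n
  · -- main case: the alphabet and the membrane structure are nonempty
    obtain ⟨⟨a0⟩, hn⟩ := hne
    set i0 : Fin n := ⟨0, hn⟩ with hi0
    refine ⟨ρ ⊕ ρ × Fin (mEx S) ⊕ Unit, inferInstance, simUMS S a0 i0, ?_⟩
    intro Rs Cs hrun
    have hmax : ∀ k, MSMaximal S (Rs k) ((Cs k).w) := fun k => (hrun.2 k).1
    have hle : ∀ k i a, lhsSum S (Rs k) i a ≤ (Cs k).w i a := fun k i a => (hmax k).1 i a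
    have hwstep : ∀ k i a, (Cs (k+1)).w i a
        = (Cs k).w i a - lhsSum S (Rs k) i a + (Cs k).pending 0 i a
          + outAt S (Rs k) 0 i a := fun k => (hrun.2 k).2.1
    have hpstep : ∀ k j i a, (Cs (k+1)).pending j i a
        = (Cs k).pending (j+1) i a + outAt S (Rs k) (j+1) i a := fun k => (hrun.2 k).2.2
    have hem : ∀ r, S.e r ≤ mEx S := fun r => Finset.le_sup (Finset.mem_univ r)
    have hy0 : ∀ k r j, mEx S ≤ j → yc S Rs k r j = 0 := by
      intro k
      induction k with
      | zero => intro r j _; rfl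
      | succ k ih =>
        intro r j hj
        have h1 : yc S Rs k r (j+1) = 0 := ih r (j+1) (le_trans hj (Nat.le_succ j))
        have h2 : S.e r ≠ j + 1 := by have := hem r; omega
        simp [yc, h1, h2]
    have hpend : ∀ k j i a, (Cs k).pending j i a = ∑ r, yc S Rs k r j * S.rhs r i a := by
      intro k
      induction k with
      | zero =>
        intro j i a
        rw [hrun.1]
        simp [msInit, yc]
      | succ k ih =>
        intro j i a
        rw [hpstep k j i a, ih (j+1) i a, outAt, ← Finset.sum_add_distrib]
        apply Finset.sum_congr rfl
        intro r _
        by_cases h : S.e r = j + 1 <;> simp [yc, h, add_mul]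
    -- the four key sum computations
    have hul_inl : ∀ k i a, ulhsSum (simUMS S a0 i0) (simRs S Rs Cs a0 i0 k) i (Sum.inl a)
        = lhsSum S (Rs k) i a
          + (if i = i0 ∧ a = a0 then (Cs k).w i0 a0 - lhsSum S (Rs k) i0 a0 else 0) := by
      intro k i a
      rw [ulhsSum, Fintype.sum_sum_type, Fintype.sum_sum_type]
      have h1 : (∑ r, simRs S Rs Cs a0 i0 k (Sum.inl r)
          * (simUMS S a0 i0).lhs (Sum.inl r) i (Sum.inl a)) = lhsSum S (Rs k) i a := by
        simp [simRs, simUMS, simLhs, lhsSum]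
      have h2 : (∑ p : ρ × Fin (mEx S), simRs S Rs Cs a0 i0 k (Sum.inr (Sum.inl p))
          * (simUMS S a0 i0).lhs (Sum.inr (Sum.inl p)) i (Sum.inl a)) = 0 := by
        apply Finset.sum_eq_zero
        rintro ⟨r, d⟩ _
        by_cases h : Zr S r <;> simp [simRs, simUMS, simLhs, h]
      rw [h1, h2]
      simp [simRs, simUMS, simLhs, mul_ite]
    have hul_inr : ∀ k i a (j : Fin (mEx S)),
        ulhsSum (simUMS S a0 i0) (simRs S Rs Cs a0 i0 k) i (Sum.inr (a, j))
        = (Cs k).pending j.val i a := by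
      intro k i a j
      rw [ulhsSum, Fintype.sum_sum_type, Fintype.sum_sum_type]
      have h1 : (∑ r, simRs S Rs Cs a0 i0 k (Sum.inl r)
          * (simUMS S a0 i0).lhs (Sum.inl r) i (Sum.inr (a, j))) = 0 := by
        simp [simRs, simUMS, simLhs]
      have h2 : (∑ p : ρ × Fin (mEx S), simRs S Rs Cs a0 i0 k (Sum.inr (Sum.inl p))
          * (simUMS S a0 i0).lhs (Sum.inr (Sum.inl p)) i (Sum.inr (a, j)))
          = ∑ r, yc S Rs k r j.val * S.rhs r i a := by
        rw [Fintype.sum_prod_type]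
        apply Finset.sum_congr rfl
        intro r _
        by_cases h : Zr S r
        · simp [simRs, simUMS, simLhs, h, h i a]
        · simp [simRs, simUMS, simLhs, h, mul_ite, Finset.sum_ite_eq]
      rw [h1, h2, hpend k j.val i a]
      simp [simRs, simUMS, simLhs]
    have hur_inl : ∀ k i a, urhsSum (simUMS S a0 i0) (simRs S Rs Cs a0 i0 k) i (Sum.inl a)
        = outAt S (Rs k) 0 i a + (Cs k).pending 0 i a
          + (if i = i0 ∧ a = a0 then (Cs k).w i0 a0 - lhsSum S (Rs k) i0 a0 else 0) := by
      intro k i a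
      rw [urhsSum, Fintype.sum_sum_type, Fintype.sum_sum_type]
      have h1 : (∑ r, simRs S Rs Cs a0 i0 k (Sum.inl r)
          * (simUMS S a0 i0).rhs (Sum.inl r) i (Sum.inl a)) = outAt S (Rs k) 0 i a := by
        simp [simRs, simUMS, simRhs, outAt, mul_ite]
      have h2 : (∑ p : ρ × Fin (mEx S), simRs S Rs Cs a0 i0 k (Sum.inr (Sum.inl p))
          * (simUMS S a0 i0).rhs (Sum.inr (Sum.inl p)) i (Sum.inl a))
          = ∑ r, yc S Rs k r 0 * S.rhs r i a := by
        rw [Fintype.sum_prod_type]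
        apply Finset.sum_congr rfl
        intro r _
        by_cases h : Zr S r
        · simp [simRs, simUMS, simRhs, h, h i a]
        · have hs := sum_fin_ite (m := mEx S) 0 (fun t => yc S Rs k r t * S.rhs r i a)
          simp only [simRs, simUMS, simRhs, Sum.elim_inr, Sum.elim_inl, if_neg h, mul_ite,
            mul_zero] at *
          rw [hs]
          by_cases h0 : 0 < mEx S
          · rw [if_pos h0]
          · rw [if_neg h0, hy0 k r 0 (by omega), zero_mul]
      rw [h1, h2, ← hpend k 0 i a]
      simp [simRs, simUMS, simRhs, mul_ite]
      omega
    have hur_inr : ∀ k i a (j : Fin (mEx S)),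
        urhsSum (simUMS S a0 i0) (simRs S Rs Cs a0 i0 k) i (Sum.inr (a, j))
        = outAt S (Rs k) (j.val+1) i a + (Cs k).pending (j.val+1) i a := by
      intro k i a j
      rw [urhsSum, Fintype.sum_sum_type, Fintype.sum_sum_type]
      have h1 : (∑ r, simRs S Rs Cs a0 i0 k (Sum.inl r)
          * (simUMS S a0 i0).rhs (Sum.inl r) i (Sum.inr (a, j)))
          = outAt S (Rs k) (j.val+1) i a := by
        simp [simRs, simUMS, simRhs, outAt, mul_ite]
      have h2 : (∑ p : ρ × Fin (mEx S), simRs S Rs Cs a0 i0 k (Sum.inr (Sum.inl p))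
          * (simUMS S a0 i0).rhs (Sum.inr (Sum.inl p)) i (Sum.inr (a, j)))
          = ∑ r, yc S Rs k r (j.val+1) * S.rhs r i a := by
        rw [Fintype.sum_prod_type]
        apply Finset.sum_congr rfl
        intro r _
        by_cases h : Zr S r
        · simp [simRs, simUMS, simRhs, h, h i a]
        · have hs := sum_fin_ite (m := mEx S) (j.val+1)
            (fun t => yc S Rs k r t * S.rhs r i a)
          simp only [simRs, simUMS, simRhs, Sum.elim_inr, Sum.elim_inl, if_neg h, mul_ite,
            mul_zero] at *
          rw [hs]
          by_cases h0 : j.val + 1 < mEx S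
          · rw [if_pos h0]
          · rw [if_neg h0, hy0 k r (j.val+1) (by omega), zero_mul]
      rw [h1, h2, ← hpend k (j.val+1) i a]
      simp [simRs, simUMS, simRhs]
    refine ⟨simRs S Rs Cs a0 i0, simWs Cs (mEx S), ⟨?_, ?_⟩, fun k i a => rfl⟩
    · -- initial configuration
      funext i b
      cases b with
      | inl a => simp [simWs, simUMS, hrun.1, msInit]
      | inr p => simp [simWs, simUMS, hrun.1, msInit]
    · -- each step
      intro k
      refine ⟨⟨?_, ?_⟩, ?_⟩
      · -- enabled
        intro i b
        cases b with
        | inl a =>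
          rw [hul_inl]
          have h1 := hle k i a
          have h2 := hle k i0 a0
          by_cases h : i = i0 ∧ a = a0
          · rw [if_pos h, h.1, h.2]
            simp only [simWs, Sum.elim_inl]
            omega
          · rw [if_neg h]
            simpa [simWs] using h1
        | inr p =>
          obtain ⟨a, j⟩ := p
          rw [hul_inr]
          simp [simWs]
      · -- maximality
        rintro ⟨r', hr'⟩
        obtain r | p | u := r'
        · refine (hmax k).2 ⟨r, fun i a => ?_⟩
          have hthis := hr' i (Sum.inl a)
          have hl : (simUMS S a0 i0).lhs (Sum.inl r) i (Sum.inl a) = S.lhs r i a := rfl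
          have hw : simWs Cs (mEx S) k i (Sum.inl a) = (Cs k).w i a := rfl
          rw [hul_inl, hl, hw] at hthis
          omega
        · obtain ⟨r, d⟩ := p
          by_cases h : Zr S r
          · have hthis := hr' i0 (Sum.inl a0)
            have hl : (simUMS S a0 i0).lhs (Sum.inr (Sum.inl (r, d))) i0 (Sum.inl a0) = 1 := by
              simp [simUMS, simLhs, h]
            have hw : simWs Cs (mEx S) k i0 (Sum.inl a0) = (Cs k).w i0 a0 := rfl
            rw [hul_inl, hl, hw, if_pos (⟨rfl, rfl⟩ : i0 = i0 ∧ a0 = a0)] at hthis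
            have h2 := hle k i0 a0
            omega
          · have hZ := h
            simp only [Zr, not_forall] at h
            obtain ⟨i, a, ha⟩ := h
            have hthis := hr' i (Sum.inr (a, d))
            have hl : (simUMS S a0 i0).lhs (Sum.inr (Sum.inl (r, d))) i (Sum.inr (a, d))
                = S.rhs r i a := by
              simp [simUMS, simLhs, hZ]
            have hw : simWs Cs (mEx S) k i (Sum.inr (a, d)) = (Cs k).pending d.val i a := rfl
            rw [hul_inr, hl, hw] at hthis
            omega
        · have hthis := hr' i0 (Sum.inl a0)
          have hl : (simUMS S a0 i0).lhs (Sum.inr (Sum.inr u)) i0 (Sum.inl a0) = 1 := by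
            simp [simUMS, simLhs]
          have hw : simWs Cs (mEx S) k i0 (Sum.inl a0) = (Cs k).w i0 a0 := rfl
          rw [hul_inl, hl, hw, if_pos (⟨rfl, rfl⟩ : i0 = i0 ∧ a0 = a0)] at hthis
          have h2 := hle k i0 a0
          omega
      · -- the configuration update
        intro i b
        cases b with
        | inl a =>
          have h1 := hwstep k i a
          have h2 := hle k i a
          have h3 := hle k i0 a0
          rw [hul_inl, hur_inl]
          simp only [simWs, Sum.elim_inl]
          by_cases h : i = i0 ∧ a = a0
          · rw [if_pos h, h.1, h.2]
            have h1' := hwstep k i0 a0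
            omega
          · rw [if_neg h]
            omega
        | inr p =>
          obtain ⟨a, j⟩ := p
          have h1 := hpstep k j.val i a
          rw [hul_inr, hur_inr]
          simp only [simWs, Sum.elim_inr]
          omega
  · -- degenerate case: no objects or no membranes, use the empty untimed system
    refine ⟨Empty, inferInstance, ⟨Empty.elim, Empty.elim, Empty.elim, fun _ _ => 0⟩, ?_⟩
    intro Rs Cs hrun
    refine ⟨fun _ => Empty.elim, fun _ _ _ => 0, ⟨rfl, ?_⟩, ?_⟩
    · intro k
      refine ⟨⟨?_, ?_⟩, ?_⟩
      · intro i a; simp [ulhsSum]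
      · rintro ⟨r, -⟩; exact r.elim
      · intro i a; simp [ulhsSum, urhsSum]
    · intro k i a
      exact absurd ⟨⟨a⟩, i.pos⟩ hne
end

section
/- For every timed Petri net with localities N = (P, T, W, L, D, M₀), there exists an untimed Petri net with localities N′ = (P′, T′, W′, L′, M₀′) with P ⊆ P′ such that for every place p ∈ P and every step k, the marking of p in N at step k under max-enabled step semantics equals the marking of p in N′ at step k. -/
/-- A timed Petri net with localities `(P,T,W,L,D,M₀)`. -/
structure PN (Pl Tr : Type) where
  Wpt : Pl → Tr → ℕ   -- weights of arcs P × T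
  Wtp : Tr → Pl → ℕ   -- weights of arcs T × P
  L : Tr → ℕ          -- locality mapping
  D : Tr → ℕ          -- delay mapping
  M0 : Pl → ℕ         -- initial marking

/-- A state of a timed Petri net: current marking `M` together with `pending j p`,
the number of tokens already produced for place `p` that still need `j` further ticks. -/
structure PState (Pl : Type) where
  M : Pl → ℕ
  pending : ℕ → Pl → ℕ

/-- `pre(U)(p) = Σ_tr U(tr)·W(p,tr)`. -/
def preT {Pl Tr : Type} [Fintype Tr] (N : PN Pl Tr) (U : Tr → ℕ) (p : Pl) : ℕ :=
  ∑ t, U t * N.Wpt p t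

/-- `post(U)(p) = Σ_tr U(tr)·W(tr,p)`. -/
def postT {Pl Tr : Type} [Fintype Tr] (N : PN Pl Tr) (U : Tr → ℕ) (p : Pl) : ℕ :=
  ∑ t, U t * N.Wtp t p

/-- Output of the transition multiset `U` with delay exactly `j`. -/
def postAtT {Pl Tr : Type} [Fintype Tr] (N : PN Pl Tr) (U : Tr → ℕ) (j : ℕ) (p : Pl) : ℕ :=
  ∑ t, if N.D t = j then U t * N.Wtp t p else 0

def PEnabled {Pl Tr : Type} [Fintype Tr] (N : PN Pl Tr) (U : Tr → ℕ) (M : Pl → ℕ) : Prop :=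
  ∀ p, preT N U p ≤ M p

/-- Conditions (i)+(ii) of max-enabledness. -/
def PMaximal {Pl Tr : Type} [Fintype Tr] (N : PN Pl Tr) (U : Tr → ℕ) (M : Pl → ℕ) : Prop :=
  PEnabled N U M ∧ ¬ ∃ t, ∀ p, N.Wpt p t + preT N U p ≤ M p

/-- The max-enabled timed firing `M [U⟩_max M'` (on states carrying pending tokens). -/
def PStep {Pl Tr : Type} [Fintype Tr] (N : PN Pl Tr) (U : Tr → ℕ) (S S' : PState Pl) : Prop :=
  PMaximal N U S.M ∧
  (∀ p, S'.M p = S.M p - preT N U p + S.pending 0 p + postAtT N U 0 p) ∧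
  (∀ j p, S'.pending j p = S.pending (j+1) p + postAtT N U (j+1) p)

def pInit {Pl Tr : Type} (N : PN Pl Tr) : PState Pl := ⟨N.M0, fun _ _ => 0⟩

/-- A run of the timed Petri net under max-enabled step semantics. -/
def PRun {Pl Tr : Type} [Fintype Tr] (N : PN Pl Tr)
    (Us : ℕ → Tr → ℕ) (Ss : ℕ → PState Pl) : Prop :=
  Ss 0 = pInit N ∧ ∀ k, PStep N (Us k) (Ss k) (Ss (k+1))

/-- An (untimed) Petri net with localities `(P,T,W,L,M₀)`. -/
structure UPN (Pl Tr : Type) where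
  Wpt : Pl → Tr → ℕ
  Wtp : Tr → Pl → ℕ
  L : Tr → ℕ
  M0 : Pl → ℕ

def upreT {Pl Tr : Type} [Fintype Tr] (N : UPN Pl Tr) (U : Tr → ℕ) (p : Pl) : ℕ :=
  ∑ t, U t * N.Wpt p t

def upostT {Pl Tr : Type} [Fintype Tr] (N : UPN Pl Tr) (U : Tr → ℕ) (p : Pl) : ℕ :=
  ∑ t, U t * N.Wtp t p

def UPMaximal {Pl Tr : Type} [Fintype Tr] (N : UPN Pl Tr) (U : Tr → ℕ) (M : Pl → ℕ) : Prop :=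
  (∀ p, upreT N U p ≤ M p) ∧ ¬ ∃ t, ∀ p, N.Wpt p t + upreT N U p ≤ M p

/-- The untimed max-enabled firing `M [U⟩_max M'`. -/
def UPStep {Pl Tr : Type} [Fintype Tr] (N : UPN Pl Tr) (U : Tr → ℕ) (M M' : Pl → ℕ) : Prop :=
  UPMaximal N U M ∧ ∀ p, M' p = M p - upreT N U p + upostT N U p

def UPRun {Pl Tr : Type} [Fintype Tr] (N : UPN Pl Tr)
    (Us : ℕ → Tr → ℕ) (Ms : ℕ → Pl → ℕ) : Prop :=
  Ms 0 = N.M0 ∧ ∀ k, UPStep N (Us k) (Ms k) (Ms (k+1))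

/-! ### Auxiliary construction: chains of fresh places for delayed transitions -/

open scoped Classical

/-- The untimed net obtained from a timed net by replacing each delayed transition by a
chain of fresh places/transitions passing tokens along one step at a time. -/
noncomputable def convNet {Pl Tr : Type} (N : PN Pl Tr) :
    UPN (Pl ⊕ (Σ t : Tr, Fin (N.D t))) (Tr ⊕ (Σ t : Tr, Fin (N.D t))) where
  Wpt
    | Sum.inl p, Sum.inl t => N.Wpt p t
    | Sum.inl _, Sum.inr _ => 0
    | Sum.inr _, Sum.inl _ => 0
    | Sum.inr s, Sum.inr s' => if s = s' then 1 else 0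
  Wtp
    | Sum.inl t, Sum.inl p => if N.D t = 0 then N.Wtp t p else 0
    | Sum.inl t, Sum.inr s => if s.1 = t ∧ (s.2 : ℕ) + 1 = N.D s.1 then 1 else 0
    | Sum.inr s, Sum.inl p => if (s.2 : ℕ) = 0 then N.Wtp s.1 p else 0
    | Sum.inr s, Sum.inr s' => if s'.1 = s.1 ∧ (s'.2 : ℕ) + 1 = (s.2 : ℕ) then 1 else 0
  L
    | Sum.inl t => N.L t
    | Sum.inr s => N.L s.1
  M0
    | Sum.inl p => N.M0 p
    | Sum.inr _ => 0

/-- Number of tokens in the chain place of `t` still needing `j+1` ticks, at step `k`. -/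
def chainC {Pl Tr : Type} (N : PN Pl Tr) (Us : ℕ → Tr → ℕ) : ℕ → Tr → ℕ → ℕ
  | 0, _, _ => 0
  | k+1, t, j => if j + 1 = N.D t then Us k t else chainC N Us k t (j+1)

lemma chainC_eq_zero {Pl Tr : Type} (N : PN Pl Tr) (Us : ℕ → Tr → ℕ) :
    ∀ (k : ℕ) (t : Tr) (j : ℕ), N.D t ≤ j → chainC N Us k t j = 0 := by
  intro k
  induction k with
  | zero => intro t j _; rfl
  | succ k ih =>
    intro t j hj
    simp only [chainC]
    rw [if_neg (by omega)]
    exact ih t (j+1) (by omega)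

lemma fin_sum_ite {n m : ℕ} (g : Fin n → ℕ) :
    (∑ j : Fin n, if (j : ℕ) = m then g j else 0) = if h : m < n then g ⟨m, h⟩ else 0 := by
  by_cases h : m < n
  · rw [dif_pos h, Finset.sum_eq_single (⟨m, h⟩ : Fin n)]
    · simp
    · intro b _ hb
      rw [if_neg (fun hc => hb (by ext; simpa using hc))]
    · simp
  · rw [dif_neg h]
    apply Finset.sum_eq_zero
    intro j _
    have hj := j.isLt
    exact if_neg (by omega)


section Lemmas
variable {Pl Tr : Type} [Fintype Tr] (N : PN Pl Tr) (U : Tr → ℕ)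
  (c : (Σ t : Tr, Fin (N.D t)) → ℕ)

lemma upre_inl (p : Pl) :
    upreT (convNet N) (Sum.elim U c) (Sum.inl p) = preT N U p := by
  simp [upreT, preT, convNet, Fintype.sum_sum_type]

lemma upre_inr (s : Σ t : Tr, Fin (N.D t)) :
    upreT (convNet N) (Sum.elim U c) (Sum.inr s) = c s := by
  simp only [upreT, convNet, Fintype.sum_sum_type, Sum.elim_inl, Sum.elim_inr]
  simp [mul_ite, Finset.sum_ite_eq]

lemma upost_inl (p : Pl) :
    upostT (convNet N) (Sum.elim U c) (Sum.inl p)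
      = postAtT N U 0 p + ∑ t, (if h : 0 < N.D t then c ⟨t, ⟨0, h⟩⟩ * N.Wtp t p else 0) := by
  simp only [upostT, postAtT, convNet, Fintype.sum_sum_type, Sum.elim_inl, Sum.elim_inr]
  congr 1
  · exact Finset.sum_congr rfl (by intro t _; rw [mul_ite, mul_zero])
  · rw [← Finset.univ_sigma_univ, Finset.sum_sigma]
    refine Finset.sum_congr rfl (fun t _ => ?_)
    rw [← fin_sum_ite (n := N.D t) (m := 0) (fun j => c ⟨t, j⟩ * N.Wtp t p)]
    exact Finset.sum_congr rfl (fun j _ => by rw [mul_ite, mul_zero])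

lemma upost_inr (t : Tr) (j : Fin (N.D t)) :
    upostT (convNet N) (Sum.elim U c) (Sum.inr ⟨t, j⟩)
      = (if (j : ℕ) + 1 = N.D t then U t else 0)
        + (if h : (j : ℕ) + 1 < N.D t then c ⟨t, ⟨(j : ℕ) + 1, h⟩⟩ else 0) := by
  simp only [upostT, convNet, Fintype.sum_sum_type, Sum.elim_inl, Sum.elim_inr]
  congr 1
  · rw [Finset.sum_eq_single t]
    · by_cases h : (j : ℕ) + 1 = N.D t <;> simp [h]
    · intro b _ hb
      rw [if_neg (fun hc => hb hc.1.symm), mul_zero]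
    · simp
  · rw [← Finset.univ_sigma_univ, Finset.sum_sigma, Finset.sum_eq_single t]
    · rw [← fin_sum_ite (n := N.D t) (m := (j : ℕ) + 1) (fun j' => c ⟨t, j'⟩)]
      refine Finset.sum_congr rfl (fun j' _ => ?_)
      by_cases h : (j' : ℕ) = (j : ℕ) + 1 <;> simp [h, eq_comm]
    · intro b _ hb
      apply Finset.sum_eq_zero
      intro j' _
      rw [if_neg (fun hc => hb hc.1.symm), mul_zero]
    · simp

end Lemmas

/-- **Proposition (timed → untimed Petri nets with localities).** For every timed Petri
net with localities `N` there exists an untimed Petri net with localities `N'` whose set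
of places contains `P` (via an injection `ι`) such that every max-enabled run of `N` is
simulated by a run of `N'`: at every step `k` and for every original place `p ∈ P` the
markings agree. -/
theorem timed_to_untimed_pn (Pl Tr : Type) [Fintype Tr] (N : PN Pl Tr) :
    ∃ (Pl' Tr' : Type) (_ : Fintype Tr') (ι : Pl → Pl') (N' : UPN Pl' Tr'),
      Function.Injective ι ∧
      ∀ (Us : ℕ → Tr → ℕ) (Ss : ℕ → PState Pl), PRun N Us Ss →
        ∃ (Us' : ℕ → Tr' → ℕ) (Ms : ℕ → Pl' → ℕ),
          UPRun N' Us' Ms ∧ ∀ (k : ℕ) (p : Pl), Ms k (ι p) = (Ss k).M p := by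
  classical
  refine ⟨Pl ⊕ (Σ t : Tr, Fin (N.D t)), Tr ⊕ (Σ t : Tr, Fin (N.D t)), inferInstance,
    Sum.inl, convNet N, Sum.inl_injective, ?_⟩
  intro Us Ss hRun
  set C := chainC N Us with hCdef
  refine ⟨fun k => Sum.elim (Us k) (fun s => C k s.1 s.2),
    fun k => Sum.elim (fun p => (Ss k).M p) (fun s => C k s.1 s.2), ⟨?_, ?_⟩, fun k p => rfl⟩
  · funext x
    cases x with
    | inl p => simp [hRun.1, pInit, convNet]
    | inr s => simp [hCdef, chainC, convNet]
  · -- the pending invariant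
    have Hpend : ∀ k j p, (Ss k).pending j p = ∑ t, C k t j * N.Wtp t p := by
      intro k
      induction k with
      | zero =>
        intro j p
        simp [hRun.1, pInit, hCdef, chainC]
      | succ k ih =>
        intro j p
        rw [(hRun.2 k).2.2 j p, ih (j+1) p]
        rw [postAtT, ← Finset.sum_add_distrib]
        refine Finset.sum_congr rfl (fun t _ => ?_)
        simp only [hCdef, chainC]
        by_cases h : j + 1 = N.D t
        · rw [if_pos h, if_pos h.symm,
            chainC_eq_zero N Us k t (j+1) (le_of_eq h.symm), zero_mul, zero_add]
        · rw [if_neg h, if_neg (fun hc => h hc.symm), add_zero]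
    intro k
    obtain ⟨⟨hen, hmax⟩, hM, _⟩ := hRun.2 k
    refine ⟨⟨?_, ?_⟩, ?_⟩
    · -- enabled
      intro p'
      cases p' with
      | inl p => rw [upre_inl]; exact hen p
      | inr s => rw [upre_inr]; exact le_rfl
    · -- maximal
      rintro ⟨t', ht'⟩
      cases t' with
      | inl t =>
        refine hmax ⟨t, fun p => ?_⟩
        have := ht' (Sum.inl p)
        rwa [upre_inl] at this
      | inr s =>
        have := ht' (Sum.inr s)
        rw [upre_inr] at this
        have h1 : (convNet N).Wpt (Sum.inr s) (Sum.inr s) = 1 := by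
          simp [convNet]
        rw [h1] at this
        simp only [Sum.elim_inr] at this
        omega
    · -- marking equation
      intro p'
      cases p' with
      | inl p =>
        show (Ss (k+1)).M p = _
        rw [hM p, Hpend k 0 p]
        simp only [Sum.elim_inl]
        rw [upre_inl, upost_inl]
        have : (∑ t, if h : 0 < N.D t then C k t 0 * N.Wtp t p else 0)
            = ∑ t, C k t 0 * N.Wtp t p := by
          refine Finset.sum_congr rfl (fun t _ => ?_)
          by_cases h : 0 < N.D t
          · rw [dif_pos h]
          · rw [dif_neg h, hCdef, chainC_eq_zero N Us k t 0 (by omega), zero_mul]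
        rw [this]
        omega
      | inr s =>
        obtain ⟨t, j⟩ := s
        show C (k+1) t j = _
        simp only [Sum.elim_inr]
        rw [upre_inr, upost_inr, Nat.sub_self, Nat.zero_add]
        simp only [hCdef, chainC]
        by_cases h : (j : ℕ) + 1 = N.D t
        · rw [if_pos h, if_pos h, dif_neg (by omega), add_zero]
        · have hj := j.isLt
          rw [if_neg h, if_neg h, dif_pos (by omega), zero_add]
end

section
/- Let Π be a timed membrane system and N_Π its corresponding timed Petri net with localities under the translation sending each object a in membrane i to a place (a,i) and each rule r of membrane j to a transition tr^r_j with delay D(tr^r_j) = e(r) and locality j. Then for configurations C, C′ of Π and a multiset R of rules, C evolves to C′ by R (in maximally parallel timed semantics) if and only if M_C [U_R⟩_max M_{C′} in N_Π, where M_C is the marking corresponding to C and U_R the multiset of transitions corresponding to R. -/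
/-- The translation of a timed membrane system into a timed Petri net with localities:
places are pairs (object, membrane), transitions are the rules, weights come from the
left/right hand sides, localities are the membranes of the rules, delays are the
execution times, and the initial marking is given by the initial multisets. -/
def toPN {V : Type} {n : ℕ} {ρ : Type} (S : MS V n ρ) : PN (V × Fin n) ρ where
  Wpt := fun p r => S.lhs r p.2 p.1
  Wtp := fun r p => S.rhs r p.2 p.1
  L := fun r => (S.mem r : ℕ)
  D := S.e
  M0 := fun p => S.w0 p.2 p.1

/-- The marking (with pending tokens) corresponding to a membrane configuration:
`M_C((a,i)) = wᵢ(a)`. -/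
def toPState {V : Type} {n : ℕ} (C : Conf V n) : PState (V × Fin n) :=
  ⟨fun p => C.w p.2 p.1, fun j p => C.pending j p.2 p.1⟩

/-- **Proposition (operational correspondence).** `C ⟹_R C'` in the timed membrane
system `S` if and only if `M_C [U_R⟩_max M_{C'}` in the corresponding timed Petri net
with localities `toPN S`. -/
theorem membrane_petri_step_correspondence {V : Type} {n : ℕ} {ρ : Type} [Fintype ρ]
    (S : MS V n ρ) (R : ρ → ℕ) (C C' : Conf V n) :
    MSStep S R C C' ↔ PStep (toPN S) R (toPState C) (toPState C') := by
  constructor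
  · rintro ⟨⟨hen, hmax⟩, hw, hp⟩
    refine ⟨⟨fun p => hen p.2 p.1, fun ⟨r, hr⟩ => hmax ⟨r, fun i a => hr (a, i)⟩⟩,
      fun p => hw p.2 p.1, fun j p => hp j p.2 p.1⟩
  · rintro ⟨⟨hen, hmax⟩, hw, hp⟩
    refine ⟨⟨fun i a => hen (a, i), fun ⟨r, hr⟩ => hmax ⟨r, fun p => hr p.2 p.1⟩⟩,
      fun i a => hw (a, i), fun j i a => hp j (a, i)⟩
end

section
/- In the translation from a timed membrane system Π to its timed Petri net with localities N_Π, a multiset R of rules is maximally enabled in configuration C (no rule can be added while respecting multiset resource bounds in every membrane) if and only if the corresponding multiset U_R of transitions is maximally enabled in marking M_C (conditions (i) and (ii) of the max-enabled firing relation). -/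
/-- **Maximal enabledness agrees under the translation.** A multiset `R` of rules is
maximally enabled in configuration `C` (conditions (i) and (ii) of the maximally parallel
semantics) iff the corresponding multiset `U_R` of transitions is maximally enabled in
the marking `M_C` (conditions (i) and (ii) of max-enabled firing). -/
theorem maximal_enabled_correspondence {V : Type} {n : ℕ} {ρ : Type} [Fintype ρ]
    (S : MS V n ρ) (R : ρ → ℕ) (C : Conf V n) :
    MSMaximal S R C.w ↔ PMaximal (toPN S) R (toPState C).M := by
  have hpre : ∀ i a, preT (toPN S) R (a, i) = lhsSum S R i a := fun i a => rfl
  constructor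
  · rintro ⟨h1, h2⟩
    refine ⟨fun p => h1 p.2 p.1, fun ⟨t, ht⟩ => h2 ⟨t, fun i a => ht (a, i)⟩⟩
  · rintro ⟨h1, h2⟩
    refine ⟨fun i a => h1 (a, i), fun ⟨r, hr⟩ => h2 ⟨r, fun p => hr p.2 p.1⟩⟩
end

section
/- In the construction of the untimed membrane system Π′ simulating a timed membrane system Π (Proposition on timed-to-untimed membrane simulation), the invariant holds for all steps k: for every membrane i and delay index j with 0 ≤ j ≤ m−1, the multiplicity of the auxiliary symbol a_j in membrane i of Π′ at step k equals Σ_{s=max(0,k−m)}^{k} rhs^s_{i,j}(a), the total number of pending copies of a in membrane i of Π that will become available after j more ticks. -/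
/-- The maximal execution time `m` of the rules of `S`. -/
def maxE {V : Type} {n : ℕ} {ρ : Type} [Fintype ρ] (S : MS V n ρ) : ℕ :=
  Finset.univ.sup S.e

/-- The untimed membrane system `Π'` simulating a timed membrane system `Π = S`:
the alphabet is extended with auxiliary symbols `a_j` (`a ∈ V`, `0 ≤ j ≤ m−1`);
each rule `r : u → v` with `e(r) > 0` is replaced by `u → v'` where each produced `a`
is replaced by `a_{e(r)−1}`, and countdown rules `a_j → a_{j−1}` (in every membrane)
and `a_0 → a` are added; rules with `e(r) = 0` are kept unchanged. -/
def simMS {V : Type} [DecidableEq V] {n : ℕ} {ρ : Type} [Fintype ρ] (S : MS V n ρ) :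
    UMS (V ⊕ V × Fin (maxE S)) n (ρ ⊕ Fin n × V × Fin (maxE S)) where
  mem := Sum.elim S.mem fun x => x.1
  w0 := fun i => Sum.elim (S.w0 i) fun _ => 0
  lhs := fun r' i a' =>
    match r' with
    | Sum.inl r => Sum.elim (S.lhs r i) (fun _ => 0) a'
    | Sum.inr (i₀, b, j) => if i = i₀ ∧ a' = Sum.inr (b, j) then 1 else 0
  rhs := fun r' i a' =>
    match r', a' with
    | Sum.inl r, Sum.inl a => if S.e r = 0 then S.rhs r i a else 0
    | Sum.inl r, Sum.inr (b, j) => if (j : ℕ) + 1 = S.e r then S.rhs r i b else 0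
    | Sum.inr (i₀, b, j), Sum.inl a => if i = i₀ ∧ (j : ℕ) = 0 ∧ a = b then 1 else 0
    | Sum.inr (i₀, b, j), Sum.inr (c, j') =>
        if i = i₀ ∧ (j' : ℕ) + 1 = (j : ℕ) ∧ c = b then 1 else 0

/-- **Simulation invariant for the timed-to-untimed membrane construction.** Every run
of the timed membrane system `S` is matched by a run of its untimed simulation `simMS S`
such that at every step `k`: the `V`-objects agree, and the multiplicity of the auxiliary
symbol `a_j` in membrane `i` equals the number of pending copies of `a` in membrane `i`
of `S` that become available after `j` more ticks (i.e. `Σ_{s=max(0,k−m)}^{k} rhs^s_{i,j}(a)`). -/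
theorem sim_membrane_invariant {V : Type} [DecidableEq V] [Fintype V] {n : ℕ}
    {ρ : Type} [Fintype ρ] [DecidableEq ρ] (S : MS V n ρ)
    (Rs : ℕ → ρ → ℕ) (Cs : ℕ → Conf V n) (hrun : MSRun S Rs Cs) :
    ∃ (Rs' : ℕ → (ρ ⊕ Fin n × V × Fin (maxE S)) → ℕ)
      (Ws : ℕ → Fin n → (V ⊕ V × Fin (maxE S)) → ℕ),
      UMSRun (simMS S) Rs' Ws ∧
      (∀ (k : ℕ) (i : Fin n) (a : V), Ws k i (Sum.inl a) = (Cs k).w i a) ∧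
      (∀ (k : ℕ) (i : Fin n) (a : V) (j : Fin (maxE S)),
        Ws k i (Sum.inr (a, j)) = (Cs k).pending (j : ℕ) i a) := by
  
  classical
  obtain ⟨h0, hstep⟩ := hrun
  set m := maxE S with hmdef
  have hE : ∀ r, S.e r ≤ m := fun r => Finset.le_sup (Finset.mem_univ r)
  have houtz : ∀ (R : ρ → ℕ) j, m < j → ∀ i a, outAt S R j i a = 0 := by
    intro R j hj i a
    apply Finset.sum_eq_zero
    intro r _
    rw [if_neg]
    have := hE r; omega
  have hpend0 : ∀ k j, m ≤ j → ∀ i a, (Cs k).pending j i a = 0 := by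
    intro k
    induction k with
    | zero => intro j hj i a; rw [h0]; rfl
    | succ k ih =>
      intro j hj i a
      rw [(hstep k).2.2 j i a, ih (j+1) (by omega) i a,
        houtz (Rs k) (j+1) (by omega) i a]
  refine ⟨fun k => Sum.elim (Rs k) (fun p => (Cs k).pending (p.2.2 : ℕ) p.1 p.2.1),
    fun k i => Sum.elim ((Cs k).w i) (fun p => (Cs k).pending (p.2 : ℕ) i p.1),
    ⟨?_, ?_⟩, fun k i a => rfl, fun k i a j => rfl⟩
  · funext i a'
    cases a' with
    | inl a => simp [simMS, h0, msInit]
    | inr p => simp [simMS, h0, msInit]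
  · intro k
    have hA : ∀ i a, ulhsSum (simMS S)
        (Sum.elim (Rs k) (fun p => (Cs k).pending (p.2.2 : ℕ) p.1 p.2.1)) i (Sum.inl a)
        = lhsSum S (Rs k) i a := by
      intro i a
      rw [ulhsSum, lhsSum, Fintype.sum_sum_type]
      simp [simMS]
    have hB : ∀ i (c : V) (j : Fin m), ulhsSum (simMS S)
        (Sum.elim (Rs k) (fun p => (Cs k).pending (p.2.2 : ℕ) p.1 p.2.1)) i (Sum.inr (c, j))
        = (Cs k).pending (j : ℕ) i c := by
      intro i c j
      rw [ulhsSum, Fintype.sum_sum_type]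
      have h1 : (∑ r : ρ, (Sum.elim (Rs k) (fun p : Fin n × V × Fin m =>
          (Cs k).pending (p.2.2 : ℕ) p.1 p.2.1))
          (Sum.inl r) * (simMS S).lhs (Sum.inl r) i (Sum.inr (c, j))) = 0 := by
        simp [simMS]
      rw [h1, zero_add]
      rw [Finset.sum_eq_single (i, (c, j))]
      · simp [simMS]
      · rintro ⟨i₀, b, j'⟩ _ hne
        simp only [Sum.elim_inr, simMS]
        rw [if_neg, mul_zero]
        rintro ⟨rfl, h2⟩
        apply hne
        simp only [Sum.inr.injEq, Prod.mk.injEq] at h2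
        obtain ⟨rfl, rfl⟩ := h2
        rfl
      · intro h; exact absurd (Finset.mem_univ _) h
    have hC : ∀ i a, urhsSum (simMS S)
        (Sum.elim (Rs k) (fun p => (Cs k).pending (p.2.2 : ℕ) p.1 p.2.1)) i (Sum.inl a)
        = outAt S (Rs k) 0 i a + (Cs k).pending 0 i a := by
      intro i a
      rw [urhsSum, Fintype.sum_sum_type, outAt]
      congr 1
      · apply Finset.sum_congr rfl
        intro r _
        simp only [Sum.elim_inl, simMS]
        split <;> simp
      · by_cases hm : 0 < m
        · rw [Finset.sum_eq_single (i, (a, (⟨0, hm⟩ : Fin m)))]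
          · simp [simMS]
          · rintro ⟨i₀, b, j'⟩ _ hne
            simp only [Sum.elim_inr, simMS]
            rw [if_neg, mul_zero]
            rintro ⟨rfl, h2, rfl⟩
            apply hne
            have : j' = ⟨0, hm⟩ := Fin.ext h2
            rw [this]
          · intro h; exact absurd (Finset.mem_univ _) h
        · have : (Cs k).pending 0 i a = 0 := hpend0 k 0 (by omega) i a
          rw [this]
          apply Finset.sum_eq_zero
          rintro ⟨i₀, b, j'⟩ _
          exact absurd j'.2 (by omega)
    have hD : ∀ i (c : V) (j : Fin m), urhsSum (simMS S)
        (Sum.elim (Rs k) (fun p => (Cs k).pending (p.2.2 : ℕ) p.1 p.2.1)) i (Sum.inr (c, j))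
        = outAt S (Rs k) ((j : ℕ)+1) i c + (Cs k).pending ((j : ℕ)+1) i c := by
      intro i c j
      rw [urhsSum, Fintype.sum_sum_type, outAt]
      congr 1
      · apply Finset.sum_congr rfl
        intro r _
        simp only [Sum.elim_inl, simMS]
        by_cases h : S.e r = (j : ℕ) + 1
        · rw [if_pos h, if_pos h.symm]
        · rw [if_neg h, if_neg (fun hh => h hh.symm), mul_zero]
      · by_cases hm : (j : ℕ) + 1 < m
        · rw [Finset.sum_eq_single (i, (c, (⟨(j : ℕ) + 1, hm⟩ : Fin m)))]
          · simp [simMS]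
          · rintro ⟨i₀, b, j'⟩ _ hne
            simp only [Sum.elim_inr, simMS]
            rw [if_neg, mul_zero]
            rintro ⟨rfl, h2, rfl⟩
            apply hne
            have : j' = ⟨(j : ℕ) + 1, hm⟩ := Fin.ext h2.symm
            rw [this]
          · intro h; exact absurd (Finset.mem_univ _) h
        · have : (Cs k).pending ((j : ℕ) + 1) i c = 0 := hpend0 k _ (by omega) i c
          rw [this]
          apply Finset.sum_eq_zero
          rintro ⟨i₀, b, j'⟩ _
          simp only [Sum.elim_inr, simMS]
          rw [if_neg, mul_zero]
          rintro ⟨rfl, h2, rfl⟩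
          have := j'.2; omega
    refine ⟨⟨?_, ?_⟩, ?_⟩
    · intro i a'
      cases a' with
      | inl a => rw [hA]; exact (hstep k).1.1 i a
      | inr p => rw [hB i p.1 p.2]; rfl
    · rintro ⟨r', hr'⟩
      cases r' with
      | inl r =>
        apply (hstep k).1.2
        refine ⟨r, fun i a => ?_⟩
        have := hr' i (Sum.inl a)
        rwa [hA] at this
      | inr p =>
        obtain ⟨i₀, b, j⟩ := p
        have := hr' i₀ (Sum.inr (b, j))
        rw [hB i₀ b j] at this
        simp only [simMS, Sum.elim_inr, and_self, if_true] at this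
        omega
    · intro i a'
      cases a' with
      | inl a =>
        rw [hA, hC]
        show (Cs (k+1)).w i a = _
        rw [(hstep k).2.1 i a]
        simp only [Sum.elim_inl]
        omega
      | inr p =>
        obtain ⟨c, j⟩ := p
        rw [hB, hD]
        show (Cs (k+1)).pending (j : ℕ) i c = _
        rw [(hstep k).2.2 (j : ℕ) i c]
        simp only [Sum.elim_inr]
        omega
end
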